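/- arXiv:1206.6304 — 4 statements merged into one kernel-verified Lean document; each statement's English description precedes it below -/
import Mathlib

section
/- (Shift property of the FRFT, key step of Appendix A.) Let α ∈ (0, π/2) and let R : ℝ → ℂ be Lebesgue integrable. Define the fractional power spectral density S : ℝ → ℂ by S(v) = ∫_ℝ R(t)·K_α(t,v) dt. Then for all s, u ∈ ℝ, ∫_ℝ R(t − s)·K_α(t,u) dt = exp(i·((s²/2)·sin α·cos α − u·s·sin α)) · S(u − s·cos α). -/
open MeasureTheory Real Complex

/-- The fractional Fourier transform (FRFT) kernel
`K_α(t,u) = √((1 − i·cot α)/(2π)) · exp(i·(u²/2)·cot α) · exp(−i·t·u·csc α + i·(t²/2)·cot α)`,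
where the square root is the principal complex square root (`z ^ (1/2)` via `cpow`). -/
noncomputable def frftKernel (α t u : ℝ) : ℂ :=
  (((1 : ℂ) - Complex.I * ((Real.cos α / Real.sin α : ℝ) : ℂ)) / (2 * (Real.pi : ℂ))) ^ ((1 : ℂ)/2) *
    Complex.exp (Complex.I * ((u : ℂ)^2 / 2) * ((Real.cos α / Real.sin α : ℝ) : ℂ)) *
    Complex.exp (-(Complex.I * (t : ℂ) * (u : ℂ) * (((Real.sin α : ℝ) : ℂ))⁻¹)
      + Complex.I * ((t : ℂ)^2 / 2) * ((Real.cos α / Real.sin α : ℝ) : ℂ))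

/-! Translating `t ↦ t + s` in the kernel and completing the square in `u` (using
`sin² α + cos² α = 1`) gives `K_α(t + s, u) = e^{iφ} · K_α(t, u − s cos α)` with a phase
`φ = (s²/2) sin α cos α − u s sin α` independent of `t`; after the change of variables
`t ↦ t + s` in the integral, this phase factors out. -/

noncomputable def frftShiftPhase (α s u : ℝ) : ℂ :=
  Complex.exp (Complex.I * (((s : ℂ)^2 / 2) * ((Real.sin α : ℝ) : ℂ) * ((Real.cos α : ℝ) : ℂ)
    - (u : ℂ) * (s : ℂ) * ((Real.sin α : ℝ) : ℂ)))

lemma frftKernel_add_left {α : ℝ} (hα : Real.sin α ≠ 0) (s t u : ℝ) :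
    frftKernel α (t + s) u = frftShiftPhase α s u * frftKernel α t (u - s * Real.cos α) := by
  have hsin : Complex.sin α ≠ 0 := by exact_mod_cast hα
  simp only [frftKernel, frftShiftPhase, mul_assoc, ← Complex.exp_add,
    mul_left_comm (Complex.exp _)]
  congr 2
  push_cast
  field_simp
  linear_combination
    (2 * (u : ℂ) * s - Complex.cos α * (s : ℂ) ^ 2) * Complex.sin_sq_add_cos_sq (α : ℂ)

theorem frft_shift_general (α : ℝ) (hα : α ∈ Set.Ioo 0 (Real.pi / 2)) (R : ℝ → ℂ)
    (S : ℝ → ℂ)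
    (hS : ∀ v : ℝ, S v = ∫ t : ℝ, R t * frftKernel α t v) :
    ∀ s u : ℝ,
      (∫ t : ℝ, R (t - s) * frftKernel α t u) =
        Complex.exp (Complex.I * (((s : ℂ)^2 / 2) * ((Real.sin α : ℝ) : ℂ) * ((Real.cos α : ℝ) : ℂ)
          - (u : ℂ) * (s : ℂ) * ((Real.sin α : ℝ) : ℂ))) * S (u - s * Real.cos α) := by
  intro s u
  have hsin : Real.sin α ≠ 0 :=
    (Real.sin_pos_of_pos_of_lt_pi hα.1 (hα.2.trans (by linarith [Real.pi_pos]))).ne'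
  calc (∫ t : ℝ, R (t - s) * frftKernel α t u)
      = ∫ t : ℝ, R t * frftKernel α (t + s) u := by
        simpa using integral_sub_right_eq_self (fun t => R t * frftKernel α (t + s) u) s
    _ = ∫ t : ℝ, frftShiftPhase α s u * (R t * frftKernel α t (u - s * Real.cos α)) := by
        simp only [frftKernel_add_left hsin, mul_left_comm (R _)]
    _ = frftShiftPhase α s u * S (u - s * Real.cos α) := by rw [integral_const_mul, hS]

/-- Shift property of the FRFT (key step of Appendix A): if `S` is the fractional power
spectral density of an integrable `R`, then the FRFT of the shifted function `t ↦ R(t − s)`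
equals `exp(i·((s²/2)·sin α·cos α − u·s·sin α)) · S(u − s·cos α)`. -/
theorem frft_shift (α : ℝ) (hα : α ∈ Set.Ioo 0 (Real.pi / 2)) (R : ℝ → ℂ)
    (hR : Integrable R) (S : ℝ → ℂ)
    (hS : ∀ v : ℝ, S v = ∫ t : ℝ, R t * frftKernel α t v) :
    ∀ s u : ℝ,
      (∫ t : ℝ, R (t - s) * frftKernel α t u) =
        Complex.exp (Complex.I * (((s : ℂ)^2 / 2) * ((Real.sin α : ℝ) : ℂ) * ((Real.cos α : ℝ) : ℂ)
          - (u : ℂ) * (s : ℂ) * ((Real.sin α : ℝ) : ℂ))) * S (u - s * Real.cos α) :=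
  frft_shift_general α hα R S hS
end

section
/- (Appendix A, probabilistic form.) Let (Ω, P) be a probability space, α ∈ (0, π/2), and let z : ℝ → Ω → ℂ be a jointly measurable stochastic process whose autocorrelation is stationary: there is an integrable function R : ℝ → ℂ with E[z(t)·conj(z(s))] = R(t − s) for all t, s. Define S(v) = ∫_ℝ R(t)·K_α(t,v) dt. Fix s, u₁ ∈ ℝ and assume (t,ω) ↦ z(t)(ω)·conj(z(s)(ω))·K_α(t,u₁) is integrable on ℝ × Ω and that t ↦ z(t)(ω)·K_α(t,u₁) is integrable for almost every ω. Then the cross-correlation between the FRFT output and an input sample satisfies E[(∫_ℝ z(t)·K_α(t,u₁) dt) · conj(z(s))] = exp(i·((s²/2)·sin α·cos α − u₁·s·sin α)) · S(u₁ − s·cos α). -/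
/-! Fubini turns the cross-correlation into `∫ R(t − s) K_α(t, u₁) dt`. Translating `t ↦ t + s`
and completing the square in the chirp `exp(i t² cot α / 2)` shows that a time shift by `s` acts on
the kernel as a frequency shift by `s cos α` times a phase, since `cot α · cos α − csc α = −sin α`. -/

open MeasureTheory Real Complex

lemma frftKernel_add (α : ℝ) (hsin : Real.sin α ≠ 0) (t s u : ℝ) :
    frftKernel α (t + s) u
      = Complex.exp (Complex.I * (((s : ℂ)^2 / 2) * ((Real.sin α : ℝ) : ℂ) * ((Real.cos α : ℝ) : ℂ)
        - (u : ℂ) * (s : ℂ) * ((Real.sin α : ℝ) : ℂ)))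
        * frftKernel α t (u - s * Real.cos α) := by
  have hsin' : Complex.sin (α : ℂ) ≠ 0 := by exact_mod_cast hsin
  unfold frftKernel
  rw [mul_assoc, ← Complex.exp_add]
  conv_rhs => rw [mul_left_comm, mul_assoc, ← Complex.exp_add, ← Complex.exp_add]
  congr 2
  push_cast
  field_simp
  linear_combination (s * (2 * u - s * Complex.cos α)) *
    Complex.sin_sq_add_cos_sq (α : ℂ)

lemma integral_comp_sub_mul_frftKernel (α : ℝ) (hsin : Real.sin α ≠ 0) (f : ℝ → ℂ) (s u : ℝ) :
    ∫ t : ℝ, f (t - s) * frftKernel α t u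
      = Complex.exp (Complex.I * (((s : ℂ)^2 / 2) * ((Real.sin α : ℝ) : ℂ) * ((Real.cos α : ℝ) : ℂ)
        - (u : ℂ) * (s : ℂ) * ((Real.sin α : ℝ) : ℂ)))
        * ∫ t : ℝ, f t * frftKernel α t (u - s * Real.cos α) := by
  rw [← integral_add_right_eq_self _ s, ← integral_const_mul]
  simp only [add_sub_cancel_right, frftKernel_add α hsin]
  congr 1 with t
  ring

lemma integral_integral_mul_conj_eq {Ω : Type*} [MeasurableSpace Ω] {P : Measure Ω} [SFinite P]
    {z : ℝ → Ω → ℂ} {s : ℝ} {c : ℝ → ℂ}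
    (hcorr : ∀ t : ℝ, ∫ ω, z t ω * (starRingEnd ℂ) (z s ω) ∂P = c t) {k : ℝ → ℂ}
    (hint : Integrable (fun p : ℝ × Ω => z p.1 p.2 * (starRingEnd ℂ) (z s p.2) * k p.1)
      (volume.prod P)) :
    ∫ ω, (∫ t : ℝ, z t ω * k t) * (starRingEnd ℂ) (z s ω) ∂P = ∫ t : ℝ, c t * k t := by
  calc ∫ ω, (∫ t : ℝ, z t ω * k t) * (starRingEnd ℂ) (z s ω) ∂P
      = ∫ ω, ∫ t : ℝ, z t ω * (starRingEnd ℂ) (z s ω) * k t ∂volume ∂P := by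
        congr 1 with ω
        rw [← integral_mul_const]
        congr 1 with t
        ring
    _ = ∫ t : ℝ, ∫ ω, z t ω * (starRingEnd ℂ) (z s ω) * k t ∂P := (integral_integral_swap hint).symm
    _ = ∫ t : ℝ, c t * k t := by simp only [integral_mul_const, hcorr]

theorem frft_output_crosscorrelation_general {Ω : Type*} [MeasurableSpace Ω] (P : Measure Ω)
    [IsProbabilityMeasure P] (α : ℝ) (hα : α ∈ Set.Ioo 0 (Real.pi / 2))
    (z : ℝ → Ω → ℂ)
    (R : ℝ → ℂ)
    (hcorr : ∀ t s : ℝ, (∫ ω, z t ω * (starRingEnd ℂ) (z s ω) ∂P) = R (t - s))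
    (S : ℝ → ℂ) (hS : ∀ v : ℝ, S v = ∫ t : ℝ, R t * frftKernel α t v)
    (s u₁ : ℝ)
    (hint : Integrable (fun p : ℝ × Ω =>
      z p.1 p.2 * (starRingEnd ℂ) (z s p.2) * frftKernel α p.1 u₁) (volume.prod P)) :
    (∫ ω, (∫ t : ℝ, z t ω * frftKernel α t u₁) * (starRingEnd ℂ) (z s ω) ∂P) =
      Complex.exp (Complex.I * (((s : ℂ)^2 / 2) * ((Real.sin α : ℝ) : ℂ) * ((Real.cos α : ℝ) : ℂ)
        - (u₁ : ℂ) * (s : ℂ) * ((Real.sin α : ℝ) : ℂ))) * S (u₁ - s * Real.cos α) := by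
  have hsin : Real.sin α ≠ 0 :=
    (Real.sin_pos_of_pos_of_lt_pi hα.1 (hα.2.trans (by linarith [Real.pi_pos]))).ne'
  rw [integral_integral_mul_conj_eq (fun t => hcorr t s) hint,
    integral_comp_sub_mul_frftKernel α hsin R s u₁, hS]

/-- Appendix A, probabilistic form: for a process whose autocorrelation is stationary,
`E[z(t)·conj(z(s))] = R(t − s)`, the cross-correlation between the FRFT output at `u₁` and the
input sample at `s` equals `exp(i·((s²/2)·sin α·cos α − u₁·s·sin α)) · S(u₁ − s·cos α)`, where
`S` is the fractional power spectral density of `R`. -/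
theorem frft_output_crosscorrelation {Ω : Type*} [MeasurableSpace Ω] (P : Measure Ω)
    [IsProbabilityMeasure P] (α : ℝ) (hα : α ∈ Set.Ioo 0 (Real.pi / 2))
    (z : ℝ → Ω → ℂ) (hmeas : Measurable (Function.uncurry z))
    (R : ℝ → ℂ) (hR : Integrable R)
    (hcorr : ∀ t s : ℝ, (∫ ω, z t ω * (starRingEnd ℂ) (z s ω) ∂P) = R (t - s))
    (S : ℝ → ℂ) (hS : ∀ v : ℝ, S v = ∫ t : ℝ, R t * frftKernel α t v)
    (s u₁ : ℝ)
    (hint : Integrable (fun p : ℝ × Ω =>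
      z p.1 p.2 * (starRingEnd ℂ) (z s p.2) * frftKernel α p.1 u₁) (volume.prod P))
    (hae : ∀ᵐ ω ∂P, Integrable (fun t : ℝ => z t ω * frftKernel α t u₁)) :
    (∫ ω, (∫ t : ℝ, z t ω * frftKernel α t u₁) * (starRingEnd ℂ) (z s ω) ∂P) =
      Complex.exp (Complex.I * (((s : ℂ)^2 / 2) * ((Real.sin α : ℝ) : ℂ) * ((Real.cos α : ℝ) : ℂ)
        - (u₁ : ℂ) * (s : ℂ) * ((Real.sin α : ℝ) : ℂ))) * S (u₁ - s * Real.cos α) :=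
  frft_output_crosscorrelation_general P α hα z R hcorr S hS s u₁ hint
end

section
/- (FRFT inversion formula.) Let α ∈ (0, π/2) and let f : ℝ → ℂ be continuous and Lebesgue integrable. Define its fractional Fourier transform F : ℝ → ℂ by F(u) = ∫_ℝ f(t)·K_α(t,u) dt, and assume F is Lebesgue integrable. Then for every t ∈ ℝ, ∫_ℝ F(u)·K_{−α}(t,u) du = f(t). -/
/-! With `c = cot α` and `s = sin α` the kernel factors as
`K_α(t,u) = C_c · χ_c(u) · χ_c(t) · e^{-2πi t (u / 2πs)}` with the chirp `χ_c(x) = e^{i c x² / 2}`.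
Hence `F(u) = C_c χ_c(u) 𝓕(χ_c f)(u / 2πs)`, while `K_{-α}` carries the inverse chirps and `C_{-c}`;
after the substitution `u = 2πs v` the inverse transform becomes
`C_c C_{-c} · 2πs · χ_c(t)⁻¹ · 𝓕⁻(𝓕(χ_c f))(t)`. Since `|χ_c| = 1`, Fourier inversion applies to
`χ_c f`, and `C_{-c} = conj C_c` gives `C_c C_{-c} = |C_c|² = √(1 + c²) / 2π = 1 / 2πs`. -/

open MeasureTheory Real Complex

open FourierTransform

noncomputable def chirp (c x : ℝ) : ℂ := cexp (((c * x ^ 2 / 2 : ℝ) : ℂ) * I)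

lemma norm_chirp (c x : ℝ) : ‖chirp c x‖ = 1 := norm_exp_ofReal_mul_I _

lemma chirp_ne_zero (c x : ℝ) : chirp c x ≠ 0 := Complex.exp_ne_zero _

@[fun_prop]
lemma continuous_chirp (c : ℝ) : Continuous (chirp c) := by
  unfold chirp; fun_prop

lemma chirp_neg (c x : ℝ) : chirp (-c) x = (chirp c x)⁻¹ := by
  rw [chirp, chirp, ← Complex.exp_neg]; congr 1; push_cast; ring

lemma integrable_chirp_mul_iff {c : ℝ} {φ : ℝ → ℂ} :
    Integrable (fun x => chirp c x * φ x) ↔ Integrable φ := by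
  refine ⟨fun h => ?_, fun h => ?_⟩
  · refine (integrable_norm_iff ?_).1 (by simpa [norm_chirp] using h.norm)
    have hφ : φ = fun x => chirp (-c) x * (chirp c x * φ x) := by
      funext x; rw [chirp_neg, inv_mul_cancel_left₀ (chirp_ne_zero c x)]
    rw [hφ]
    exact (continuous_chirp _).aestronglyMeasurable.mul h.aestronglyMeasurable
  · exact h.bdd_mul (continuous_chirp c).aestronglyMeasurable
      (ae_of_all _ fun x => (norm_chirp c x).le)

noncomputable def frftConst (c : ℝ) : ℂ := ((1 - I * c) / (2 * π)) ^ (1 / 2 : ℂ)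

lemma frftConst_mul_frftConst_neg (c : ℝ) :
    frftConst c * frftConst (-c) = √(1 + c ^ 2) / (2 * π) := by
  set z : ℂ := (1 - I * c) / (2 * π)
  have hz : z = ((2 * π)⁻¹ : ℝ) * (1 - I * c) := by
    simp only [z]; push_cast; ring
  have hz_re : 0 < z.re := by
    simpa [hz] using inv_pos.2 two_pi_pos
  have hz_arg : z.arg ≠ π := fun h => by
    linarith [((arg_eq_pi_iff).1 h).1]
  have hz_norm : ‖z‖ = √(1 + c ^ 2) / (2 * π) := by
    rw [hz, norm_mul, norm_real, Real.norm_of_nonneg (by positivity), norm_eq_sqrt_sq_add_sq]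
    simp [div_eq_inv_mul]
  have h_neg : ((1 - I * ((-c : ℝ) : ℂ)) / (2 * π) : ℂ) = (starRingEnd ℂ) z := by
    simp [z, map_div₀, map_ofNat]
  have h_half : (starRingEnd ℂ) (1 / 2 : ℂ) = 1 / 2 := by simp [map_ofNat]
  rw [frftConst, frftConst, h_neg, conj_cpow z _ hz_arg, h_half, mul_conj, normSq_eq_norm_sq,
    show (1 / 2 : ℂ) = ((1 / 2 : ℝ) : ℂ) by norm_num, norm_cpow_real,
    ← Real.rpow_natCast, ← Real.rpow_mul (norm_nonneg z)]
  norm_num [hz_norm]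

lemma frftConst_ne_zero (c : ℝ) : frftConst c ≠ 0 := by
  refine left_ne_zero_of_mul (b := frftConst (-c)) ?_
  rw [frftConst_mul_frftConst_neg]
  exact_mod_cast (div_pos (Real.sqrt_pos.2 (by positivity)) (by positivity)).ne'

lemma frftKernel_eq (α t u : ℝ) :
    frftKernel α t u = frftConst (Real.cot α) * chirp (Real.cot α) u * chirp (Real.cot α) t *
      cexp (((-2 * π * t * (u / (2 * π * Real.sin α)) : ℝ) : ℂ) * I) := by
  have hπ : (π : ℂ) ≠ 0 := ofReal_ne_zero.2 pi_ne_zero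
  rw [frftKernel, frftConst, chirp, chirp, Real.cot_eq_cos_div_sin]
  simp only [mul_assoc, ← Complex.exp_add]
  congr 2
  push_cast
  field_simp
  ring

lemma frftKernel_neg_eq (α t u : ℝ) :
    frftKernel (-α) t u = frftConst (-Real.cot α) * (chirp (Real.cot α) u)⁻¹ *
      (chirp (Real.cot α) t)⁻¹ * cexp (((2 * π * (u / (2 * π * Real.sin α)) * t : ℝ) : ℂ) * I) := by
  have hcot : Real.cot (-α) = -Real.cot α := by
    simp only [Real.cot_eq_cos_div_sin, Real.cos_neg, Real.sin_neg, div_neg]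
  rw [frftKernel_eq, hcot, Real.sin_neg, chirp_neg, chirp_neg]
  congr 4
  ring

lemma integral_mul_frftKernel (f : ℝ → ℂ) (α u : ℝ) :
    ∫ t, f t * frftKernel α t u = frftConst (Real.cot α) * chirp (Real.cot α) u *
      𝓕 (fun t => chirp (Real.cot α) t * f t) (u / (2 * π * Real.sin α)) := by
  simp_rw [frftKernel_eq, Real.fourier_real_eq_integral_exp_smul, smul_eq_mul,
    ← integral_const_mul]
  congr with t
  ring

lemma integral_exp_mul_comp_div_eq_fourierInv (φ : ℝ → ℂ) (b t : ℝ) :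
    ∫ u, cexp (((2 * π * (u / b) * t : ℝ) : ℂ) * I) * φ (u / b) = |b| * 𝓕⁻ φ t := by
  rw [Measure.integral_comp_div (fun v => cexp (((2 * π * v * t : ℝ) : ℂ) * I) * φ v),
    Real.fourierInv_eq_fourier_neg, Real.fourier_real_eq_integral_exp_smul, real_smul]
  congr 3 with v
  rw [smul_eq_mul]
  congr 4
  ring

lemma sqrt_one_add_cot_sq {α : ℝ} (hα : Real.sin α ≠ 0) :
    √(1 + Real.cot α ^ 2) = |Real.sin α|⁻¹ := by
  have h : 1 + Real.cot α ^ 2 = (Real.sin α)⁻¹ ^ 2 := by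
    rw [Real.cot_eq_cos_div_sin]
    field_simp
    linarith [Real.sin_sq_add_cos_sq α]
  rw [h, Real.sqrt_sq_eq_abs, abs_inv]

lemma integrable_of_const_mul_chirp_mul_comp_div {a : ℂ} (ha : a ≠ 0) {c b : ℝ} (hb : b ≠ 0)
    {φ : ℝ → ℂ} (h : Integrable fun u => a * chirp c u * φ (u / b)) : Integrable φ := by
  simp_rw [mul_assoc] at h
  exact (integrable_comp_div_iff φ hb).1
    (integrable_chirp_mul_iff.1 ((integrable_const_mul_iff (isUnit_iff_ne_zero.2 ha) _).1 h))

/-- FRFT inversion formula: the inverse transform with kernel `K_{−α}` recovers a continuous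
integrable function from its FRFT, provided the transform is itself integrable. -/
theorem frft_inversion (α : ℝ) (hα : α ∈ Set.Ioo 0 (Real.pi / 2)) (f : ℝ → ℂ)
    (hf_cont : Continuous f) (hf_int : Integrable f) (F : ℝ → ℂ)
    (hF : ∀ u : ℝ, F u = ∫ t : ℝ, f t * frftKernel α t u)
    (hF_int : Integrable F) :
    ∀ t : ℝ, (∫ u : ℝ, F u * frftKernel (-α) t u) = f t := by
  intro t
  have hs : 0 < Real.sin α := Real.sin_pos_of_pos_of_lt_pi hα.1 (by linarith [hα.2, pi_pos])
  set c := Real.cot α with hc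
  set b := 2 * π * Real.sin α with hb
  set g : ℝ → ℂ := fun x => chirp c x * f x with hg_def
  have hFg : F = fun u => frftConst c * chirp c u * 𝓕 g (u / b) :=
    funext fun u => (hF u).trans (integral_mul_frftKernel f α u)
  have hg : Integrable g := integrable_chirp_mul_iff.2 hf_int
  have h𝓕g : Integrable (𝓕 g) :=
    integrable_of_const_mul_chirp_mul_comp_div (frftConst_ne_zero c) (by positivity) (hFg ▸ hF_int)
  calc ∫ u, F u * frftKernel (-α) t u
      = ∫ u, frftConst c * frftConst (-c) * (chirp c t)⁻¹ *
          (cexp (((2 * π * (u / b) * t : ℝ) : ℂ) * I) * 𝓕 g (u / b)) := by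
        congr with u
        rw [hFg, frftKernel_neg_eq, ← hc, ← hb]
        field_simp [chirp_ne_zero]
    _ = frftConst c * frftConst (-c) * (chirp c t)⁻¹ * (|b| * g t) := by
        rw [integral_const_mul, integral_exp_mul_comp_div_eq_fourierInv,
          hg.fourierInv_fourier_eq h𝓕g ((continuous_chirp c).mul hf_cont).continuousAt]
    _ = f t := by
        rw [frftConst_mul_frftConst_neg, sqrt_one_add_cot_sq hs.ne', abs_of_pos hs,
          abs_of_pos (by positivity), hb, hg_def]
        have hs' : ((Real.sin α : ℝ) : ℂ) ≠ 0 := ofReal_ne_zero.2 hs.ne'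
        simp only [ofReal_inv, ofReal_mul, ofReal_ofNat]
        field_simp [chirp_ne_zero]
end

section
/- (Propositions 3 and 4, essential content.) Let α ∈ (0, π/2) and let R : ℝ → ℂ be continuous. Define the FRFT-output autocorrelation function G : ℝ × ℝ → ℂ of a wide-sense-stationary input with autocorrelation R by G(u₁,u₂) = sec α · R(sec α·(u₁ − u₂)) · exp(i·(u₂² − u₁²)·tan α). If G is shift-invariant, i.e. G(u₁ + h, u₂ + h) = G(u₁, u₂) for all u₁, u₂, h ∈ ℝ, then R(τ) = 0 for every τ ≠ 0. Hence the FRFT output can be wide-sense stationary only if the input autocorrelation is supported at the origin, i.e. only for a white input process. -/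
/-!
A common shift `h` of both arguments leaves the argument `u₁ - u₂` of `R` unchanged but multiplies
the chirp `exp (i (u₂² - u₁²) tan α)` by the phase `exp (-2 i tan α (u₁ - u₂) h)`. When
`u₁ ≠ u₂` this phase takes the value `-1` for a suitable `h`, so shift invariance forces
`G u₁ u₂ = 0`, that is `R (sec α (u₁ - u₂)) = 0`.
-/

open Real Complex

theorem eq_zero_of_forall_mul_exp_mul_I_eq {z : ℂ} {s : ℝ} (hs : s ≠ 0)
    (hz : ∀ h : ℝ, z * cexp ((s * h : ℝ) * I) = z) : z = 0 := by
  have hπ := hz (π / s)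
  rw [mul_div_cancel₀ π hs, exp_pi_mul_I] at hπ
  linear_combination -hπ / 2

theorem chirp_correlation_shift {c s t : ℝ} {R : ℝ → ℂ} {G : ℝ → ℝ → ℂ}
    (hG : ∀ u₁ u₂ : ℝ, G u₁ u₂ =
      (c : ℂ) * R (s * (u₁ - u₂)) * cexp (I * ((u₂ : ℂ)^2 - (u₁ : ℂ)^2) * (t : ℂ)))
    (u₁ u₂ h : ℝ) :
    G (u₁ + h) (u₂ + h) = G u₁ u₂ * cexp ((-2 * t * (u₁ - u₂) * h : ℝ) * I) := by
  rw [hG, hG, add_sub_add_right_eq_sub, mul_assoc _ (cexp _), ← Complex.exp_add]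
  congr 2
  push_cast
  ring

theorem frft_output_stationary_implies_white_general (α : ℝ) (hα : α ∈ Set.Ioo 0 (Real.pi / 2))
    (R : ℝ → ℂ) (G : ℝ → ℝ → ℂ)
    (hG : ∀ u₁ u₂ : ℝ, G u₁ u₂ =
      (((Real.cos α)⁻¹ : ℝ) : ℂ) * R ((Real.cos α)⁻¹ * (u₁ - u₂)) *
        Complex.exp (Complex.I * ((u₂ : ℂ)^2 - (u₁ : ℂ)^2) * ((Real.tan α : ℝ) : ℂ)))
    (hshift : ∀ u₁ u₂ h : ℝ, G (u₁ + h) (u₂ + h) = G u₁ u₂) :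
    ∀ τ : ℝ, τ ≠ 0 → R τ = 0 := by
  intro τ hτ
  have hcos : Real.cos α ≠ 0 := (Real.cos_pos_of_mem_Ioo ⟨by linarith [hα.1, pi_pos], hα.2⟩).ne'
  have htan : Real.tan α ≠ 0 := (Real.tan_pos_of_pos_of_lt_pi_div_two hα.1 hα.2).ne'
  have hG0 : G (τ * Real.cos α) 0 = 0 :=
    eq_zero_of_forall_mul_exp_mul_I_eq (s := -2 * Real.tan α * (τ * Real.cos α - 0))
      (by simp [htan, hτ, hcos]) fun h => by rw [← chirp_correlation_shift hG, hshift]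
  rw [hG, sub_zero, mul_comm τ, inv_mul_cancel_left₀ hcos] at hG0
  have hsec : (((Real.cos α)⁻¹ : ℝ) : ℂ) ≠ 0 := by exact_mod_cast inv_ne_zero hcos
  exact (mul_eq_zero.mp ((mul_eq_zero.mp hG0).resolve_right (exp_ne_zero _))).resolve_left hsec

/-- Propositions 3 and 4 (essential content): if the FRFT-output autocorrelation
`G(u₁,u₂) = sec α · R(sec α·(u₁ − u₂)) · exp(i·(u₂² − u₁²)·tan α)` of a wide-sense-stationary
input with continuous autocorrelation `R` is shift-invariant (as required for wide-sense
stationarity of the output), then `R` vanishes away from the origin, i.e. the input must be a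
white process. -/
theorem frft_output_stationary_implies_white (α : ℝ) (hα : α ∈ Set.Ioo 0 (Real.pi / 2))
    (R : ℝ → ℂ) (hR : Continuous R) (G : ℝ → ℝ → ℂ)
    (hG : ∀ u₁ u₂ : ℝ, G u₁ u₂ =
      (((Real.cos α)⁻¹ : ℝ) : ℂ) * R ((Real.cos α)⁻¹ * (u₁ - u₂)) *
        Complex.exp (Complex.I * ((u₂ : ℂ)^2 - (u₁ : ℂ)^2) * ((Real.tan α : ℝ) : ℂ)))
    (hshift : ∀ u₁ u₂ h : ℝ, G (u₁ + h) (u₂ + h) = G u₁ u₂) :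
    ∀ τ : ℝ, τ ≠ 0 → R τ = 0 :=
  frft_output_stationary_implies_white_general α hα R G hG hshift
end
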